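/- For any c > 0 and initial value m₀ ∈ ℝ, the sequence defined by m_{t+1} = m_t + c·φ(-m_t), with φ(u) = 1/(1+e^{-u}), is strictly increasing and tends to +∞ as t → ∞. -/

import Mathlib

/-! If the margins stayed bounded they would converge to some `L`, and passing to the limit in the
recursion gives `L = L + c φ(-L)`, impossible since `φ > 0`. -/

noncomputable def phi (u : ℝ) : ℝ := 1 / (1 + Real.exp (-u))

open Filter Topology

section PositiveIncrement

variable {f : ℝ → ℝ} {m : ℕ → ℝ}

theorem strictMono_of_succ_eq_add_pos (hf : ∀ x, 0 < f x) (hrec : ∀ t, m (t + 1) = m t + f (m t)) :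
    StrictMono m :=
  strictMono_nat_of_lt_succ fun t => by linarith [hrec t, hf (m t)]

theorem tendsto_atTop_of_succ_eq_add_pos (hf_cont : Continuous f) (hf : ∀ x, 0 < f x)
    (hrec : ∀ t, m (t + 1) = m t + f (m t)) : Tendsto m atTop atTop := by
  refine (tendsto_atTop_of_monotone (strictMono_of_succ_eq_add_pos hf hrec).monotone).resolve_right ?_
  rintro ⟨L, hL⟩
  have hL_succ : Tendsto (fun t => m (t + 1)) atTop (𝓝 L) := (tendsto_add_atTop_iff_nat 1).mpr hL
  have hL_step : Tendsto (fun t => m (t + 1)) atTop (𝓝 (L + f L)) := by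
    simpa only [hrec, Function.comp_def] using hL.add ((hf_cont.tendsto L).comp hL)
  linarith [tendsto_nhds_unique hL_succ hL_step, hf L]

end PositiveIncrement

theorem phi_pos (u : ℝ) : 0 < phi u := by
  unfold phi
  positivity

theorem continuous_phi : Continuous phi := by
  unfold phi
  exact continuous_const.div (continuous_const.add (Real.continuous_exp.comp continuous_neg))
    fun u => by positivity

theorem margin_monotone_divergence (c : ℝ) (hc : 0 < c) (m : ℕ → ℝ)
    (hrec : ∀ t, m (t + 1) = m t + c * phi (-(m t))) :
    StrictMono m ∧ Filter.Tendsto m Filter.atTop Filter.atTop := by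
  have hstep_pos : ∀ x, 0 < c * phi (-x) := fun x => mul_pos hc (phi_pos _)
  have hstep_cont : Continuous fun x => c * phi (-x) :=
    continuous_const.mul (continuous_phi.comp continuous_neg)
  exact ⟨strictMono_of_succ_eq_add_pos hstep_pos hrec,
    tendsto_atTop_of_succ_eq_add_pos hstep_cont hstep_pos hrec⟩
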